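/- arXiv:math/0110013 — 8 statements merged into one kernel-verified Lean document; each statement's English description precedes it below -/
import Mathlib

section
/- Let A be a unital associative algebra over ℂ, let ℏ ∈ ℂ, and let a, b, c, d ∈ A satisfy the gl(2)_ℏ relations [a,b]=ℏb, [a,c]=-ℏc, [a,d]=0, [b,c]=ℏ(a-d), [b,d]=ℏb, [c,d]=-ℏc. Then the 2×2 matrix L = [[a,b],[c,d]] over A satisfies the Cayley–Hamilton identity L·L - ((a+d) + ℏ)•L + (ad - (bc+cb)/2 + (ℏ/2)(a+d))•1 = 0, where for u ∈ A and a matrix M over A, u•M denotes the matrix obtained by multiplying every entry of M on the left by u, and 1 is the 2×2 identity matrix over A. -/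
/-- Cayley–Hamilton identity for the matrix `L = [[a,b],[c,d]]` whose entries
generate `gl(2)_ℏ`. Here `u • M` for `u : A` multiplies every entry of `M`
on the left by `u`. -/
theorem gl2_cayley_hamilton {A : Type*} [Ring A] [Algebra ℂ A] (ℏ : ℂ) (a b c d : A)
    (hab : a * b - b * a = ℏ • b)
    (hac : a * c - c * a = (-ℏ) • c)
    (had : a * d - d * a = 0)
    (hbc : b * c - c * b = ℏ • (a - d))
    (hbd : b * d - d * b = ℏ • b)
    (hcd : c * d - d * c = (-ℏ) • c) :
    let L : Matrix (Fin 2) (Fin 2) A := !![a, b; c, d]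
    L * L - ((a + d) + algebraMap ℂ A ℏ) • L
      + (a * d - (1 / 2 : ℂ) • (b * c + c * b) + (ℏ / 2 : ℂ) • (a + d))
        • (1 : Matrix (Fin 2) (Fin 2) A) = 0 := by
  intro L
  have hBC : b * c = c * b + ℏ • (a - d) := by rw [← hbc]; abel
  have hAD : a * d = d * a := by rwa [sub_eq_zero] at had
  have hBD : b * d = d * b + ℏ • b := by rw [← hbd]; abel
  have hCA : c * a = a * c + ℏ • c := by
    rw [sub_eq_iff_eq_add, neg_smul] at hac
    rw [hac]; abel
  have hDC : d * c = c * d + ℏ • c := by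
    rw [sub_eq_iff_eq_add, neg_smul] at hcd
    rw [hcd]; abel
  have hmap : algebraMap ℂ A ℏ = ℏ • (1 : A) := Algebra.algebraMap_eq_smul_one ℏ
  ext i j
  fin_cases i <;> fin_cases j <;>
    simp [L, Matrix.mul_apply, Fin.sum_univ_two, Matrix.one_apply, hmap, smul_mul_assoc] <;>
    simp only [hBC, hAD, hBD, hCA, hDC, add_mul, smul_mul_assoc, one_mul] <;> module
end

section
/- Let A be a unital associative algebra over ℂ, let ℏ, α ∈ ℂ, and let a, b, c ∈ A satisfy the sl(2)_ℏ relations [a,b]=ℏb, [a,c]=-ℏc, [b,c]=2ℏa, together with the Casimir condition -a² - (bc+cb)/2 = α·1. Let L = [[a,b],[c,-a]], L₁ = L ⊗ 1₂ (Kronecker product), let P be the 4×4 flip matrix (P(eᵢ⊗eⱼ) = eⱼ⊗eᵢ), and set L₍₂₎ = (1/2)(1+P)·L₁·(1+P). Then L₍₂₎³ - 4ℏ·L₍₂₎² + 4(α+ℏ²)·L₍₂₎ - 4ℏα·(1+P) = 0 in the algebra of 4×4 matrices over A. -/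
/-!
The symmetrizer `1 + P` factors as `E G` through the symmetric tensors, with `G E = 2`. Hence
`L₍₂₎ = ½ E K G`, where `K = G L₁ E` is the 3 × 3 matrix by which `L` acts on symmetric tensors,
the powers of `L₍₂₎` are `½ E Kⁿ G`, and the identity reduces to
`K³ - 4ℏK² + 4(α+ℏ²)K - 8ℏα = 0`. The Casimir condition together with `[b,c] = 2ℏa` expresses
`bc` and `cb` through `a`, so the commutation relations normal-order every entry of this cubic
to a combination of the monomials `aⁱbʲ` and `aⁱcʲ`.
-/

open Kronecker

section SymmetricTensors

variable (R : Type*) [Ring R]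

/-- Columns `e₀ ⊗ e₀`, `e₀ ⊗ e₁ + e₁ ⊗ e₀`, `e₁ ⊗ e₁`: a basis of the symmetric tensors. -/
def symTensorBasis : Matrix (Fin 2 × Fin 2) (Fin 3) R :=
  Matrix.of fun p k => if (p.1 : ℕ) + p.2 = k then 1 else 0

/-- Coordinates of `(1 + P) v` in `symTensorBasis`. -/
def symTensorCoord : Matrix (Fin 3) (Fin 2 × Fin 2) R :=
  Matrix.of fun k p => if (p.1 : ℕ) + p.2 = k then (if p.1 = p.2 then 2 else 1) else 0

theorem one_add_swap_eq_symTensorBasis_mul_symTensorCoord :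
    1 + (Matrix.of fun p q : Fin 2 × Fin 2 => if p.1 = q.2 ∧ p.2 = q.1 then (1 : R) else 0) =
      symTensorBasis R * symTensorCoord R := by
  ext ⟨i, j⟩ ⟨k, l⟩
  fin_cases i <;> fin_cases j <;> fin_cases k <;> fin_cases l <;>
    simp [symTensorBasis, symTensorCoord, Matrix.mul_apply, Fin.sum_univ_three,
      one_add_one_eq_two]

theorem symTensorCoord_mul_symTensorBasis : symTensorCoord R * symTensorBasis R = 2 := by
  ext k l
  fin_cases k <;> fin_cases l <;>
    simp [symTensorBasis, symTensorCoord, Matrix.mul_apply, Fintype.sum_prod_type,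
      Matrix.ofNat_apply, one_add_one_eq_two]

variable {R}

/-- The matrix of `M ⊗ 1 + 1 ⊗ M` on the symmetric tensors, in `symTensorBasis`. -/
def symSquareAct (M : Matrix (Fin 2) (Fin 2) R) : Matrix (Fin 3) (Fin 3) R :=
  !![2 * M 0 0, 2 * M 0 1, 0; M 1 0, M 0 0 + M 1 1, M 0 1; 0, 2 * M 1 0, 2 * M 1 1]

theorem symTensorCoord_mul_kronecker_one_mul_symTensorBasis (M : Matrix (Fin 2) (Fin 2) R) :
    symTensorCoord R * (M ⊗ₖ (1 : Matrix (Fin 2) (Fin 2) R)) * symTensorBasis R =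
      symSquareAct M := by
  ext k l
  fin_cases k <;> fin_cases l <;>
    simp [symTensorBasis, symTensorCoord, symSquareAct, Matrix.mul_apply, Fintype.sum_prod_type,
      Matrix.one_apply]

end SymmetricTensors

theorem Matrix.inv_smul_mul_mul_pow_succ {𝕜 R m n : Type*} [Field 𝕜] [Ring R] [Algebra 𝕜 R]
    [Fintype m] [DecidableEq m] [Fintype n] [DecidableEq n]
    {E : Matrix m n R} {G : Matrix n m R} {t : 𝕜} (hGE : G * E = t • 1) (K : Matrix n n R)
    (k : ℕ) : (t⁻¹ • (E * K * G)) ^ (k + 1) = t⁻¹ • (E * K ^ (k + 1) * G) := by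
  induction k with
  | zero => simp
  | succ k ih =>
    calc (t⁻¹ • (E * K * G)) ^ (k + 2)
        = (t⁻¹ * t⁻¹) • (E * K ^ (k + 1) * (G * E) * K * G) := by
          rw [pow_succ, ih, smul_mul_smul_comm]; simp only [Matrix.mul_assoc]
      _ = (t⁻¹ * t⁻¹ * t) • (E * K ^ (k + 2) * G) := by
          rw [hGE, Matrix.mul_smul, Matrix.mul_one, Matrix.smul_mul, Matrix.smul_mul, smul_smul,
            pow_succ K (k + 1), Matrix.mul_assoc E]
      _ = t⁻¹ • (E * K ^ (k + 2) * G) := by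
          congr 1
          simpa using mul_self_mul_inv t⁻¹

section Sl2

variable {𝕜 A : Type*} [Ring A]

theorem sl2_mul_eq_of_casimir [Field 𝕜] [CharZero 𝕜] [Algebra 𝕜 A] {ℏ α : 𝕜} {a b c : A}
    (hbc : b * c - c * b = (2 * ℏ) • a)
    (hcas : -a ^ 2 - (1 / 2 : 𝕜) • (b * c + c * b) = algebraMap 𝕜 A α) :
    b * c = ℏ • a - a * a - α • 1 ∧ c * b = (-ℏ) • a - a * a - α • 1 := by
  rw [Algebra.algebraMap_eq_smul_one, pow_two] at hcas
  constructor
  · linear_combination (norm := module) (1 / 2 : 𝕜) • hbc - hcas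
  · linear_combination (norm := module) -(1 / 2 : 𝕜) • hbc - hcas

theorem symSquareAct_sl2_cubic [CommRing 𝕜] [Algebra 𝕜 A] {ℏ α : 𝕜} {a b c : A}
    (hab : a * b - b * a = ℏ • b) (hac : a * c - c * a = (-ℏ) • c)
    (hbc : b * c = ℏ • a - a * a - α • 1) (hcb : c * b = (-ℏ) • a - a * a - α • 1) :
    let K := symSquareAct !![a, b; c, -a]
    K ^ 3 - (4 * ℏ) • K ^ 2 + (4 * (α + ℏ ^ 2)) • K - (8 * ℏ * α) • 1 = 0 := by
  intro K
  have hba : b * a = a * b - ℏ • b := by rw [← hab]; abel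
  have hca : c * a = a * c + ℏ • c := by linear_combination (norm := module) -hac
  have hba' (x : A) : b * (a * x) = a * (b * x) - ℏ • (b * x) := by
    rw [← mul_assoc, hba, sub_mul, mul_assoc, smul_mul_assoc]
  have hca' (x : A) : c * (a * x) = a * (c * x) + ℏ • (c * x) := by
    rw [← mul_assoc, hca, add_mul, mul_assoc, smul_mul_assoc]
  ext i j
  simp only [K, pow_succ, pow_zero, one_mul, Matrix.sub_apply, Matrix.add_apply, Matrix.smul_apply,
    Matrix.mul_apply, Fin.sum_univ_three, Matrix.one_apply]
  fin_cases i <;> fin_cases j <;>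
    simp [symSquareAct, two_mul, mul_add, add_mul, mul_sub, sub_mul, mul_assoc,
      smul_add, smul_sub, hba, hba', hca, hca', hbc, hcb] <;> module

end Sl2

/-- The identity `L₍₂₎³ - 4ℏL₍₂₎² + 4(α+ℏ²)L₍₂₎ - 4ℏα(1+P) = 0` for the
symmetrized extension `L₍₂₎ = ½(1+P)L₁(1+P)` of the `sl(2)_ℏ` matrix `L`,
where the Casimir takes the value `α`. -/
theorem sl2_extension_identity {A : Type*} [Ring A] [Algebra ℂ A] (ℏ α : ℂ) (a b c : A)
    (hab : a * b - b * a = ℏ • b)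
    (hac : a * c - c * a = (-ℏ) • c)
    (hbc : b * c - c * b = (2 * ℏ) • a)
    (hcas : -a ^ 2 - (1 / 2 : ℂ) • (b * c + c * b) = algebraMap ℂ A α) :
    let L : Matrix (Fin 2) (Fin 2) A := !![a, b; c, -a]
    let L₁ : Matrix (Fin 2 × Fin 2) (Fin 2 × Fin 2) A := L ⊗ₖ (1 : Matrix (Fin 2) (Fin 2) A)
    let P : Matrix (Fin 2 × Fin 2) (Fin 2 × Fin 2) A :=
      fun p q => if p.1 = q.2 ∧ p.2 = q.1 then 1 else 0
    let L₂ : Matrix (Fin 2 × Fin 2) (Fin 2 × Fin 2) A := (1 / 2 : ℂ) • ((1 + P) * L₁ * (1 + P))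
    L₂ ^ 3 - (4 * ℏ) • L₂ ^ 2 + (4 * (α + ℏ ^ 2)) • L₂ - (4 * ℏ * α) • (1 + P) = 0 := by
  intro L L₁ P L₂
  set E := symTensorBasis A
  set G := symTensorCoord A
  set K := symSquareAct L
  obtain ⟨hbc', hcb'⟩ := sl2_mul_eq_of_casimir hbc hcas
  have hP : 1 + P = E * G := one_add_swap_eq_symTensorBasis_mul_symTensorCoord A
  have hGE : G * E = (2 : ℂ) • 1 := by
    rw [symTensorCoord_mul_symTensorBasis, two_smul, one_add_one_eq_two]
  have hL₂ : L₂ = (2 : ℂ)⁻¹ • (E * K * G) := by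
    have hK : G * L₁ * E = K := symTensorCoord_mul_kronecker_one_mul_symTensorBasis L
    simp only [L₂, hP, ← hK, one_div, Matrix.mul_assoc]
  calc L₂ ^ 3 - (4 * ℏ) • L₂ ^ 2 + (4 * (α + ℏ ^ 2)) • L₂ - (4 * ℏ * α) • (1 + P)
      = (2 : ℂ)⁻¹ •
          (E * (K ^ 3 - (4 * ℏ) • K ^ 2 + (4 * (α + ℏ ^ 2)) • K - (8 * ℏ * α) • 1) * G) := by
        rw [hP, hL₂, Matrix.inv_smul_mul_mul_pow_succ hGE K 2,
          Matrix.inv_smul_mul_mul_pow_succ hGE K 1]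
        simp only [Matrix.mul_sub, Matrix.sub_mul, Matrix.mul_add, Matrix.add_mul, Matrix.mul_smul,
          Matrix.smul_mul, Matrix.mul_one]
        module
    _ = 0 := by
      rw [symSquareAct_sl2_cubic hab hac hbc' hcb', Matrix.mul_zero, Matrix.zero_mul, smul_zero]
end

section
/- Let A be a unital associative algebra over ℂ, let ℏ, α ∈ ℂ, and let a, b, c ∈ A satisfy the sl(2)_ℏ relations [a,b]=ℏb, [a,c]=-ℏc, [b,c]=2ℏa, together with the Casimir condition -a² - (bc+cb)/2 = α·1. Then the 3×3 matrix M = [[2a, 2b, 0], [c, 0, b], [0, 2c, -2a]] over A satisfies the Cayley–Hamilton identity M³ - 4ℏ·M² + 4(α+ℏ²)·M - 8ℏα·1 = 0, where 1 is the 3×3 identity matrix over A. -/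
set_option maxHeartbeats 1600000 in
/-- Cayley–Hamilton identity for the spin-1 extension matrix
`M = [[2a, 2b, 0], [c, 0, b], [0, 2c, -2a]]` of the `sl(2)_ℏ` matrix `L`,
restricted to the symmetric component, with Casimir value `α`. -/
theorem spin_one_cayley_hamilton {A : Type*} [Ring A] [Algebra ℂ A] (ℏ α : ℂ) (a b c : A)
    (hab : a * b - b * a = ℏ • b)
    (hac : a * c - c * a = (-ℏ) • c)
    (hbc : b * c - c * b = (2 * ℏ) • a)
    (hcas : -a ^ 2 - (1 / 2 : ℂ) • (b * c + c * b) = algebraMap ℂ A α) :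
    let M : Matrix (Fin 3) (Fin 3) A := !![2 * a, 2 * b, 0; c, 0, b; 0, 2 * c, -(2 * a)]
    M ^ 3 - (4 * ℏ) • M ^ 2 + (4 * (α + ℏ ^ 2)) • M
      - (8 * ℏ * α) • (1 : Matrix (Fin 3) (Fin 3) A) = 0 := by
  intro M
  rw [Algebra.algebraMap_eq_smul_one, sq] at hcas
  have hba : b * a = a * b - ℏ • b := by linear_combination (norm := module) -hab
  have hca : c * a = a * c + ℏ • c := by linear_combination (norm := module) -hac
  have hbc' : b * c = ℏ • a - a * a - α • (1 : A) := by
    linear_combination (norm := module) -hcas + ((2:ℂ)⁻¹) • hbc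
  have hcb' : c * b = (-ℏ) • a - a * a - α • (1 : A) := by
    linear_combination (norm := module) -hcas - ((2:ℂ)⁻¹) • hbc
  have Hba : ∀ x : A, b * (a * x) = a * (b * x) - ℏ • (b * x) := fun x => by
    rw [← mul_assoc, hba]; simp [sub_mul, smul_mul_assoc, mul_assoc]
  have Hca : ∀ x : A, c * (a * x) = a * (c * x) + ℏ • (c * x) := fun x => by
    rw [← mul_assoc, hca]; simp [add_mul, smul_mul_assoc, mul_assoc]
  have Hbc : ∀ x : A, b * (c * x) = ℏ • (a * x) - a * (a * x) - α • x := fun x => by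
    rw [← mul_assoc, hbc']; simp [sub_mul, smul_mul_assoc, mul_assoc]
  have Hcb : ∀ x : A, c * (b * x) = (-ℏ) • (a * x) - a * (a * x) - α • x := fun x => by
    rw [← mul_assoc, hcb']; simp [sub_mul, smul_mul_assoc, mul_assoc]
  have h2 : ∀ x : A, (2 : A) * x = (2 : ℂ) • x := fun x => by
    rw [two_smul, two_mul]
  ext i j
  fin_cases i <;> fin_cases j <;>
    simp [M, pow_succ, Matrix.mul_apply, Fin.sum_univ_succ, Matrix.one_apply] <;>
    simp only [h2, mul_assoc, mul_add, add_mul, mul_sub, sub_mul, mul_smul_comm,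
      smul_mul_assoc, Hba, hba, Hca, hca, Hbc, hbc', Hcb, hcb', smul_sub, smul_add,
      smul_smul, mul_one, one_mul, mul_zero, zero_mul, mul_neg, neg_mul, smul_neg] <;>
    module
end

section
/- Let A be a unital associative algebra over ℂ, let ℏ, α ∈ ℂ, and let x, y, z ∈ A satisfy the su(2)_ℏ relations [x,y]=ℏz, [y,z]=ℏx, [z,x]=ℏy, together with the sphere condition x² + y² + z² = α·1. Then the 3×3 matrix M = 2·[[0, -z, y], [z, 0, -x], [-y, x, 0]] over A satisfies M³ - 4ℏ·M² + 4(α+ℏ²)·M - 8ℏα·1 = 0, where 1 is the 3×3 identity matrix over A. -/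
/-- Cayley–Hamilton identity for the compact-form matrix
`L̄₍₂₎ = 2·[[0,-z,y],[z,0,-x],[-y,x,0]]` over the noncommutative sphere. -/
theorem compact_spin_one_cayley_hamilton {A : Type*} [Ring A] [Algebra ℂ A] (ℏ α : ℂ) (x y z : A)
    (hxy : x * y - y * x = ℏ • z)
    (hyz : y * z - z * y = ℏ • x)
    (hzx : z * x - x * z = ℏ • y)
    (hsph : x ^ 2 + y ^ 2 + z ^ 2 = algebraMap ℂ A α) :
    let M : Matrix (Fin 3) (Fin 3) A := (2 : ℂ) • !![0, -z, y; z, 0, -x; -y, x, 0]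
    M ^ 3 - (4 * ℏ) • M ^ 2 + (4 * (α + ℏ ^ 2)) • M
      - (8 * ℏ * α) • (1 : Matrix (Fin 3) (Fin 3) A) = 0 := by
  intro M
  show _ = _
  ext i j
  simp only [M, pow_succ, pow_zero, one_mul, Matrix.sub_apply, Matrix.add_apply,
    Matrix.smul_apply, Matrix.mul_apply, Fin.sum_univ_three, Matrix.smul_mul, Matrix.mul_smul,
    Matrix.one_apply, Matrix.zero_apply]
  fin_cases i <;> fin_cases j <;>
    simp [Matrix.cons_val_zero, Matrix.cons_val_one, Matrix.head_cons]
  · linear_combination (norm := (simp only [sub_mul, mul_sub, add_mul, mul_add, neg_mul, mul_neg, neg_neg, smul_neg, neg_smul, smul_mul_assoc, mul_smul_comm, smul_smul, mul_assoc, Algebra.algebraMap_eq_smul_one, pow_succ, pow_zero, one_mul, mul_one]; match_scalars <;> ring))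
      (-8:ℂ) • (hxy * z) - (8:ℂ) • (hzx * y) + (8:ℂ) • (x * hyz) + ((8:ℂ)*ℏ) • hsph
  · linear_combination (norm := (simp only [sub_mul, mul_sub, add_mul, mul_add, neg_mul, mul_neg, neg_neg, smul_neg, neg_smul, smul_mul_assoc, mul_smul_comm, smul_smul, mul_assoc, Algebra.algebraMap_eq_smul_one, pow_succ, pow_zero, one_mul, mul_one]; match_scalars <;> ring))
      (8:ℂ) • (hzx * x) + (8:ℂ) • (x * hzx) + (8:ℂ) • (hsph * z) + ((8:ℂ)*ℏ) • hxy
  · linear_combination (norm := (simp only [sub_mul, mul_sub, add_mul, mul_add, neg_mul, mul_neg, neg_neg, smul_neg, neg_smul, smul_mul_assoc, mul_smul_comm, smul_smul, mul_assoc, Algebra.algebraMap_eq_smul_one, pow_succ, pow_zero, one_mul, mul_one]; match_scalars <;> ring))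
      (-8:ℂ) • (hsph * y) + (8:ℂ) • (hxy * x) + (8:ℂ) • (x * hxy) - ((8:ℂ)*ℏ) • hzx
  · linear_combination (norm := (simp only [sub_mul, mul_sub, add_mul, mul_add, neg_mul, mul_neg, neg_neg, smul_neg, neg_smul, smul_mul_assoc, mul_smul_comm, smul_smul, mul_assoc, Algebra.algebraMap_eq_smul_one, pow_succ, pow_zero, one_mul, mul_one]; match_scalars <;> ring))
      (-8:ℂ) • (hsph * z) + (8:ℂ) • (hyz * y) + (8:ℂ) • (y * hyz) - ((8:ℂ)*ℏ) • hxy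
  · linear_combination (norm := (simp only [sub_mul, mul_sub, add_mul, mul_add, neg_mul, mul_neg, neg_neg, smul_neg, neg_smul, smul_mul_assoc, mul_smul_comm, smul_smul, mul_assoc, Algebra.algebraMap_eq_smul_one, pow_succ, pow_zero, one_mul, mul_one]; match_scalars <;> ring))
      (-8:ℂ) • (hyz * x) - (8:ℂ) • (hxy * z) + (8:ℂ) • (y * hzx) + ((8:ℂ)*ℏ) • hsph
  · linear_combination (norm := (simp only [sub_mul, mul_sub, add_mul, mul_add, neg_mul, mul_neg, neg_neg, smul_neg, neg_smul, smul_mul_assoc, mul_smul_comm, smul_smul, mul_assoc, Algebra.algebraMap_eq_smul_one, pow_succ, pow_zero, one_mul, mul_one]; match_scalars <;> ring))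
      (8:ℂ) • (hxy * y) + (8:ℂ) • (y * hxy) + (8:ℂ) • (hsph * x) + ((8:ℂ)*ℏ) • hyz
  · linear_combination (norm := (simp only [sub_mul, mul_sub, add_mul, mul_add, neg_mul, mul_neg, neg_neg, smul_neg, neg_smul, smul_mul_assoc, mul_smul_comm, smul_smul, mul_assoc, Algebra.algebraMap_eq_smul_one, pow_succ, pow_zero, one_mul, mul_one]; match_scalars <;> ring))
      (8:ℂ) • (hyz * z) + (8:ℂ) • (z * hyz) + (8:ℂ) • (hsph * y) + ((8:ℂ)*ℏ) • hzx
  · linear_combination (norm := (simp only [sub_mul, mul_sub, add_mul, mul_add, neg_mul, mul_neg, neg_neg, smul_neg, neg_smul, smul_mul_assoc, mul_smul_comm, smul_smul, mul_assoc, Algebra.algebraMap_eq_smul_one, pow_succ, pow_zero, one_mul, mul_one]; match_scalars <;> ring))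
      (-8:ℂ) • (hsph * x) + (8:ℂ) • (hzx * z) + (8:ℂ) • (z * hzx) - ((8:ℂ)*ℏ) • hyz
  · linear_combination (norm := (simp only [sub_mul, mul_sub, add_mul, mul_add, neg_mul, mul_neg, neg_neg, smul_neg, neg_smul, smul_mul_assoc, mul_smul_comm, smul_smul, mul_assoc, Algebra.algebraMap_eq_smul_one, pow_succ, pow_zero, one_mul, mul_one]; match_scalars <;> ring))
      (-8:ℂ) • (hzx * y) - (8:ℂ) • (hyz * x) + (8:ℂ) • (z * hxy) + ((8:ℂ)*ℏ) • hsph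
end

section
/- Let A be a unital associative algebra over ℂ, let ℏ ∈ ℂ and α ∈ ℂ with α ≠ 0, and let x, y, z ∈ A satisfy the su(2)_ℏ relations [x,y]=ℏz, [y,z]=ℏx, [z,x]=ℏy, together with the sphere condition x² + y² + z² = α·1. Let M = 2·[[0, -z, y], [z, 0, -x], [-y, x, 0]]. Then the idempotent e₁₁ = (4α)⁻¹·(M² - 2ℏ·M + 4α·1) equals the rank-one matrix α⁻¹·[[x², xy, xz], [yx, y², yz], [zx, zy, z²]], i.e. (e₁₁)ᵢⱼ = α⁻¹·xᵢxⱼ where (x₁, x₂, x₃) = (x, y, z). -/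
set_option maxHeartbeats 1000000

/-- Over the noncommutative sphere, the idempotent
`e₁₁ = (4α)⁻¹·(M² - 2ℏM + 4α·1)` attached to the root `λ₁₁ = 2ℏ` of the
Cayley–Hamilton identity of `M = L̄₍₂₎` is the rank-one matrix
`α⁻¹·(xᵢxⱼ)` built from `(x₁,x₂,x₃) = (x,y,z)`. -/
theorem e11_rank_one {A : Type*} [Ring A] [Algebra ℂ A] (ℏ α : ℂ) (hα : α ≠ 0) (x y z : A)
    (hxy : x * y - y * x = ℏ • z)
    (hyz : y * z - z * y = ℏ • x)
    (hzx : z * x - x * z = ℏ • y)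
    (hsph : x ^ 2 + y ^ 2 + z ^ 2 = algebraMap ℂ A α) :
    let M : Matrix (Fin 3) (Fin 3) A := (2 : ℂ) • !![0, -z, y; z, 0, -x; -y, x, 0]
    (4 * α)⁻¹ • (M * M - (2 * ℏ) • M + (4 * α) • (1 : Matrix (Fin 3) (Fin 3) A))
      = α⁻¹ • !![x * x, x * y, x * z; y * x, y * y, y * z; z * x, z * y, z * z] := by
  intro M
  have h1 : ((4*α) : ℂ) • (1:A) = (4:ℂ) • (x*x) + (4:ℂ)•(y*y) + (4:ℂ)•(z*z) := by
    have : (α:ℂ) • (1:A) = x*x + y*y + z*z := by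
      rw [Algebra.smul_def, mul_one, ← hsph]; ring_nf; rw [pow_two, pow_two, pow_two]
    rw [show ((4*α):ℂ) = (4:ℂ)*α from rfl, mul_smul, this]
    module
  have hxy' : x * y = ℏ • z + y * x := by rw [← hxy]; abel
  have hyz' : y * z = ℏ • x + z * y := by rw [← hyz]; abel
  have hzx' : z * x = ℏ • y + x * z := by rw [← hzx]; abel
  ext i j
  fin_cases i <;> fin_cases j <;>
    simp [M, Matrix.mul_apply, Fin.sum_univ_three, Matrix.one_apply, hxy', hyz', hzx'] <;>
    (try rw [h1]) <;> (try match_scalars) <;> (field_simp; try ring)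
end

section
/- Let A be a unital associative algebra over ℂ, let ℏ ∈ ℂ and α ∈ ℂ with α ≠ 0, and let x, y, z ∈ A satisfy the su(2)_ℏ relations [x,y]=ℏz, [y,z]=ℏx, [z,x]=ℏy, together with the sphere condition x² + y² + z² = α·1. Set e₁₁ = α⁻¹·[[x², xy, xz], [yx, y², yz], [zx, zy, z²]] (a 3×3 matrix over A), let B be the 3×1 column matrix (x; y; z) and let C = α⁻¹·(x, y, z) be the 1×3 row matrix. Then C·B equals the 1×1 identity matrix over A, B·C = e₁₁, C = C·e₁₁, and B = e₁₁·B. Consequently the idempotents e₀₀ = (1) ∈ M₁(A) and e₁₁ ∈ M₃(A) define isomorphic projective A-modules, i.e. the quantum line bundle E^{1,1}(ℏ) is isomorphic to the trivial one E^{0,0}(ℏ). -/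
/-- The quantum line bundle `E^{1,1}(ℏ)` is isomorphic to the trivial one
`E^{0,0}(ℏ)`: the row matrix `C = α⁻¹·(x, y, z)` and the column matrix
`B = (x; y; z)` realize an isomorphism between the idempotents
`e₀₀ = (1) ∈ M₁(A)` and `e₁₁ ∈ M₃(A)` in the sense that
`CB = e₀₀`, `BC = e₁₁`, `C = e₀₀C = Ce₁₁`, `B = e₁₁B = Be₀₀`. -/
theorem E11_isomorphic_to_trivial {A : Type*} [Ring A] [Algebra ℂ A]
    (ℏ α : ℂ) (hα : α ≠ 0) (x y z : A)
    (hxy : x * y - y * x = ℏ • z)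
    (hyz : y * z - z * y = ℏ • x)
    (hzx : z * x - x * z = ℏ • y)
    (hsph : x ^ 2 + y ^ 2 + z ^ 2 = algebraMap ℂ A α) :
    let e₀₀ : Matrix (Fin 1) (Fin 1) A := 1
    let e₁₁ : Matrix (Fin 3) (Fin 3) A :=
      α⁻¹ • !![x * x, x * y, x * z; y * x, y * y, y * z; z * x, z * y, z * z]
    let B : Matrix (Fin 3) (Fin 1) A := !![x; y; z]
    let C : Matrix (Fin 1) (Fin 3) A := α⁻¹ • !![x, y, z]
    C * B = e₀₀ ∧ B * C = e₁₁ ∧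
    e₀₀ * C = C ∧ C * e₁₁ = C ∧ e₁₁ * B = B ∧ B * e₀₀ = B := by
  intro e₀₀ e₁₁ B C
  have hkey : x * x + y * y + z * z = α • (1 : A) := by
    have := hsph
    rw [Algebra.algebraMap_eq_smul_one] at this
    simpa [pow_two] using this
  have hinv : α⁻¹ * α = 1 := inv_mul_cancel₀ hα
  have h4 : ∀ v : A, (α⁻¹ * α⁻¹) • (x * (x * v) + y * (y * v) + z * (z * v)) = α⁻¹ • v := by
    intro v
    rw [← mul_assoc, ← mul_assoc, ← mul_assoc, ← add_mul, ← add_mul, hkey,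
      smul_mul_assoc, one_mul, smul_smul, mul_assoc, hinv, mul_one]
  have h5 : ∀ v : A, α⁻¹ • (v * x * x + v * y * y + v * z * z) = v := by
    intro v
    rw [mul_assoc, mul_assoc, mul_assoc, ← mul_add, ← mul_add, hkey,
      mul_smul_comm, mul_one, smul_smul, hinv, one_smul]
  refine ⟨?_, ?_, ?_, ?_, ?_, ?_⟩ <;>
    · ext i j
      fin_cases i <;> fin_cases j <;>
        simp [e₀₀, e₁₁, B, C, Matrix.mul_apply, Fin.sum_univ_three,
          Matrix.one_apply, smul_mul_assoc, mul_smul_comm, smul_smul,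
          ← smul_add, ← add_mul, ← mul_add, hkey, hinv, mul_comm α⁻¹, h4, h5]
end

section
/- Let A be a unital associative algebra over ℂ, let ℏ, α, s ∈ ℂ with s ≠ 0, α ≠ 0 and s² = ℏ² - 4α, and set λ₂₀ = ℏ - s, λ₁₁ = 2ℏ, λ₀₂ = ℏ + s. Let x, y, z ∈ A satisfy the su(2)_ℏ relations [x,y]=ℏz, [y,z]=ℏx, [z,x]=ℏy and the sphere condition x² + y² + z² = α·1, and let M = 2·[[0, -z, y], [z, 0, -x], [-y, x, 0]]. Then the trace of the idempotent e₂₀ = ((λ₁₁-λ₂₀)(λ₀₂-λ₂₀))⁻¹·(λ₁₁·1 - M)(λ₀₂·1 - M) equals (1 + 2ℏ/s)·1, and the trace of the idempotent e₀₂ = ((λ₂₀-λ₀₂)(λ₁₁-λ₀₂))⁻¹·(λ₂₀·1 - M)(λ₁₁·1 - M) equals (1 - 2ℏ/s)·1. (This is the case k₁+k₂ = 2 of the formula tr e_{k₁k₂} = 1 + (k₁-k₂)ℏ/√(ℏ²-4α).) -/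
lemma trace_aux {A : Type*} [Ring A] [Algebra ℂ A] (a b c α : ℂ) (x y z : A)
    (key : x * x + y * y + z * z = α • (1:A)) :
    Matrix.trace (c • ((a • (1 : Matrix (Fin 3) (Fin 3) A) - (2:ℂ) • !![0, -z, y; z, 0, -x; -y, x, 0]) * (b • (1 : Matrix (Fin 3) (Fin 3) A) - (2:ℂ) • !![0, -z, y; z, 0, -x; -y, x, 0]))) = (c * (3 * (a * b) - 8 * α)) • (1:A) := by
  have hx : x * x = α • (1:A) - y * y - z * z := by
    rw [← key]; abel
  simp [Matrix.trace, Matrix.diag, Matrix.mul_apply, Fin.sum_univ_three, Matrix.smul_apply,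
    Matrix.sub_apply, Matrix.one_apply, mul_sub, sub_mul, smul_smul, hx]
  module

/-- Traces of the derived idempotents: `tr e₂₀ = 1 + 2ℏ/s` and
`tr e₀₂ = 1 - 2ℏ/s` where `s = √(ℏ² - 4α)` (the case `k₁ + k₂ = 2` of
`tr e_{k₁k₂} = 1 + (k₁ - k₂)ℏ/√(ℏ² - 4α)`). -/
theorem trace_derived_idempotents {A : Type*} [Ring A] [Algebra ℂ A]
    (ℏ α s : ℂ) (hs : s ≠ 0) (hα : α ≠ 0) (hs2 : s ^ 2 = ℏ ^ 2 - 4 * α) (x y z : A)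
    (hxy : x * y - y * x = ℏ • z)
    (hyz : y * z - z * y = ℏ • x)
    (hzx : z * x - x * z = ℏ • y)
    (hsph : x ^ 2 + y ^ 2 + z ^ 2 = algebraMap ℂ A α) :
    let l₂₀ : ℂ := ℏ - s
    let l₁₁ : ℂ := 2 * ℏ
    let l₀₂ : ℂ := ℏ + s
    let M : Matrix (Fin 3) (Fin 3) A := (2 : ℂ) • !![0, -z, y; z, 0, -x; -y, x, 0]
    let e₂₀ : Matrix (Fin 3) (Fin 3) A :=
      ((l₁₁ - l₂₀) * (l₀₂ - l₂₀))⁻¹ •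
        ((l₁₁ • (1 : Matrix (Fin 3) (Fin 3) A) - M) * (l₀₂ • (1 : Matrix (Fin 3) (Fin 3) A) - M))
    let e₀₂ : Matrix (Fin 3) (Fin 3) A :=
      ((l₂₀ - l₀₂) * (l₁₁ - l₀₂))⁻¹ •
        ((l₂₀ • (1 : Matrix (Fin 3) (Fin 3) A) - M) * (l₁₁ • (1 : Matrix (Fin 3) (Fin 3) A) - M))
    Matrix.trace e₂₀ = algebraMap ℂ A (1 + 2 * ℏ / s) ∧
    Matrix.trace e₀₂ = algebraMap ℂ A (1 - 2 * ℏ / s) := by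
  intro l₂₀ l₁₁ l₀₂ M e₂₀ e₀₂
  have key : x * x + y * y + z * z = α • (1:A) := by
    have := hsph
    rw [Algebra.algebraMap_eq_smul_one] at this
    simpa [sq] using this
  have h4α : (ℏ + s) * (ℏ - s) = 4 * α := by linear_combination -hs2
  have h4 : (ℏ + s) * (ℏ - s) ≠ 0 := by
    rw [h4α]; exact mul_ne_zero (by norm_num) hα
  have hps : ℏ + s ≠ 0 := left_ne_zero_of_mul h4
  have hms : ℏ - s ≠ 0 := right_ne_zero_of_mul h4
  constructor
  · rw [show Matrix.trace e₂₀ = ((((l₁₁ - l₂₀) * (l₀₂ - l₂₀))⁻¹) * (3 * (l₁₁ * l₀₂) - 8 * α)) • (1:A)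
      from trace_aux _ _ _ _ x y z key]
    rw [Algebra.algebraMap_eq_smul_one]
    congr 1
    show ((2*ℏ - (ℏ-s)) * ((ℏ+s) - (ℏ-s)))⁻¹ * (3 * (2*ℏ * (ℏ+s)) - 8*α) = 1 + 2*ℏ/s
    have hne : (2*ℏ - (ℏ-s)) * ((ℏ+s) - (ℏ-s)) ≠ 0 := by
      have h1 : 2*ℏ - (ℏ-s) = ℏ + s := by ring
      have h2 : (ℏ+s) - (ℏ-s) = 2*s := by ring
      rw [h1, h2]
      exact mul_ne_zero hps (mul_ne_zero two_ne_zero hs)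
    rw [inv_mul_eq_div, div_eq_iff hne]
    field_simp
    linear_combination (-2*s) * hs2
  · rw [show Matrix.trace e₀₂ = ((((l₂₀ - l₀₂) * (l₁₁ - l₀₂))⁻¹) * (3 * (l₂₀ * l₁₁) - 8 * α)) • (1:A)
      from trace_aux _ _ _ _ x y z key]
    rw [Algebra.algebraMap_eq_smul_one]
    congr 1
    show (((ℏ-s) - (ℏ+s)) * (2*ℏ - (ℏ+s)))⁻¹ * (3 * ((ℏ-s) * (2*ℏ)) - 8*α) = 1 - 2*ℏ/s
    have hne : ((ℏ-s) - (ℏ+s)) * (2*ℏ - (ℏ+s)) ≠ 0 := by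
      have h1 : (ℏ-s) - (ℏ+s) = -(2*s) := by ring
      have h2 : 2*ℏ - (ℏ+s) = ℏ - s := by ring
      rw [h1, h2]
      exact mul_ne_zero (neg_ne_zero.mpr (mul_ne_zero two_ne_zero hs)) hms
    rw [inv_mul_eq_div, div_eq_iff hne]
    field_simp
    linear_combination (-2*s) * hs2
end

section
/- Let R be a commutative ring, let L be a 2×2 matrix over R, and let λ₁, λ₂ ∈ R satisfy λ₁ + λ₂ = tr L and λ₁λ₂ = det L. Let D = L ⊗ 1₂ + 1₂ ⊗ L be the 4×4 matrix over R given by the Kronecker sum. Then (D - 2λ₁·1)(D - (λ₁+λ₂)·1)(D - 2λ₂·1) = 0, where 1 denotes the 4×4 identity matrix; i.e., the minimal polynomial of the first coproduct extension Δ(L) of L divides (t - 2λ₁)(t - λ₁ - λ₂)(t - 2λ₂). -/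
open Kronecker

set_option maxHeartbeats 4000000 in
/-- In the commutative case, the Kronecker sum `D = Δ(L) = L ⊗ 1 + 1 ⊗ L` of a
2×2 matrix `L` with eigenvalues `λ₁, λ₂` (i.e. `λ₁ + λ₂ = tr L`,
`λ₁λ₂ = det L`) satisfies `(D - 2λ₁)(D - λ₁ - λ₂)(D - 2λ₂) = 0`. -/
theorem kronecker_sum_cubic {R : Type*} [CommRing R] (L : Matrix (Fin 2) (Fin 2) R)
    (l₁ l₂ : R) (hsum : l₁ + l₂ = Matrix.trace L) (hprod : l₁ * l₂ = Matrix.det L) :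
    let D : Matrix (Fin 2 × Fin 2) (Fin 2 × Fin 2) R :=
      L ⊗ₖ (1 : Matrix (Fin 2) (Fin 2) R) + (1 : Matrix (Fin 2) (Fin 2) R) ⊗ₖ L
    (D - (2 * l₁) • (1 : Matrix (Fin 2 × Fin 2) (Fin 2 × Fin 2) R))
      * (D - (l₁ + l₂) • (1 : Matrix (Fin 2 × Fin 2) (Fin 2 × Fin 2) R))
      * (D - (2 * l₂) • (1 : Matrix (Fin 2 × Fin 2) (Fin 2 × Fin 2) R)) = 0 := by
  intro D
  rw [Matrix.trace_fin_two] at hsum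
  rw [Matrix.det_fin_two] at hprod
  ext ⟨i, j⟩ ⟨k, l⟩
  fin_cases i <;> fin_cases j <;> fin_cases k <;> fin_cases l <;>
    simp [D, Matrix.mul_apply, Fintype.sum_prod_type, Fin.sum_univ_two,
      Matrix.kroneckerMap_apply, Matrix.one_apply, Prod.ext_iff]
  · linear_combination (-2 * L 0 1 * L 1 0 + 4 * L 0 0 * l₂ + 4 * L 0 0 * l₁ - 8 * L 0 0^2) * hsum + (-4 * l₂ - 4 * l₁ + 8 * L 0 0) * hprod
  · linear_combination (2 * L 0 1 * l₂ + 2 * L 0 1 * l₁ - L 0 1 * L 1 1 - 7 * L 0 0 * L 0 1) * hsum + (4 * L 0 1) * hprod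
  · linear_combination (2 * L 0 1 * l₂ + 2 * L 0 1 * l₁ - L 0 1 * L 1 1 - 7 * L 0 0 * L 0 1) * hsum + (4 * L 0 1) * hprod
  · linear_combination (-6 * L 0 1^2) * hsum + (0 : R) * hprod
  · linear_combination (2 * L 1 0 * l₂ + 2 * L 1 0 * l₁ - L 1 0 * L 1 1 - 7 * L 0 0 * L 1 0) * hsum + (4 * L 1 0) * hprod
  · linear_combination (-4 * l₁ * l₂ + 2 * L 1 1 * l₂ + 2 * L 1 1 * l₁ - L 1 1^2 - 6 * L 0 1 * L 1 0 + 2 * L 0 0 * l₂ + 2 * L 0 0 * l₁ - 2 * L 0 0 * L 1 1 - L 0 0^2) * hsum + (0 : R) * hprod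
  · linear_combination (-6 * L 0 1 * L 1 0) * hsum + (0 : R) * hprod
  · linear_combination (2 * L 0 1 * l₂ + 2 * L 0 1 * l₁ - 7 * L 0 1 * L 1 1 - L 0 0 * L 0 1) * hsum + (4 * L 0 1) * hprod
  · linear_combination (2 * L 1 0 * l₂ + 2 * L 1 0 * l₁ - L 1 0 * L 1 1 - 7 * L 0 0 * L 1 0) * hsum + (4 * L 1 0) * hprod
  · linear_combination (-6 * L 0 1 * L 1 0) * hsum + (0 : R) * hprod
  · linear_combination (-4 * l₁ * l₂ + 2 * L 1 1 * l₂ + 2 * L 1 1 * l₁ - L 1 1^2 - 6 * L 0 1 * L 1 0 + 2 * L 0 0 * l₂ + 2 * L 0 0 * l₁ - 2 * L 0 0 * L 1 1 - L 0 0^2) * hsum + (0 : R) * hprod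
  · linear_combination (2 * L 0 1 * l₂ + 2 * L 0 1 * l₁ - 7 * L 0 1 * L 1 1 - L 0 0 * L 0 1) * hsum + (4 * L 0 1) * hprod
  · linear_combination (-6 * L 1 0^2) * hsum + (0 : R) * hprod
  · linear_combination (2 * L 1 0 * l₂ + 2 * L 1 0 * l₁ - 7 * L 1 0 * L 1 1 - L 0 0 * L 1 0) * hsum + (4 * L 1 0) * hprod
  · linear_combination (2 * L 1 0 * l₂ + 2 * L 1 0 * l₁ - 7 * L 1 0 * L 1 1 - L 0 0 * L 1 0) * hsum + (4 * L 1 0) * hprod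
  · linear_combination (-8 * l₁ * l₂ + 4 * L 1 1 * l₂ + 4 * L 1 1 * l₁ - 8 * L 1 1^2 - 10 * L 0 1 * L 1 0 + 8 * L 0 0 * L 1 1) * hsum + (4 * l₂ + 4 * l₁ - 8 * L 0 0) * hprod
end
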